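/- Let Ω ⊂ R^{2n+1} be open and u: Ω → R continuous. If ξ_k → ξ₀ in Ω, p_k ∈ ∂_H u(ξ_k), and p_k → p₀ in R^{2n}, then p₀ ∈ ∂_H u(ξ₀). (Closedness of the graph of the horizontal normal mapping, which yields upper semicontinuity.) -/

import Mathlib

open scoped BigOperators

/-- A point of the Heisenberg group `ℍⁿ` in real coordinates `(x, y, t)`. -/
abbrev Hpt (n : ℕ) := (Fin n → ℝ) × (Fin n → ℝ) × ℝ

/-- Euclidean dot product on `ℝⁿ`. -/
def dotR {n : ℕ} (a b : Fin n → ℝ) : ℝ := ∑ i, a i * b i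

/-- Heisenberg group law. -/
def hmul {n : ℕ} (ξ η : Hpt n) : Hpt n :=
  (ξ.1 + η.1, ξ.2.1 + η.2.1,
    ξ.2.2 + η.2.2 + 2 * (dotR ξ.2.1 η.1 - dotR ξ.1 η.2.1))

/-- Heisenberg group inverse. -/
def hinv {n : ℕ} (ξ : Hpt n) : Hpt n := (-ξ.1, -ξ.2.1, -ξ.2.2)

/-- Heisenberg dilation `δ_l`. -/
def hdil {n : ℕ} (l : ℝ) (ξ : Hpt n) : Hpt n := (l • ξ.1, l • ξ.2.1, l ^ 2 * ξ.2.2)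

/-- The Korányi gauge `N(x,y,t) = ((|x|²+|y|²)² + t²)^(1/4)`. -/
noncomputable def KN {n : ℕ} (ξ : Hpt n) : ℝ :=
  ((dotR ξ.1 ξ.1 + dotR ξ.2.1 ξ.2.1) ^ 2 + ξ.2.2 ^ 2) ^ ((1 : ℝ) / 4)

/-- The Korányi–Cygan metric. -/
noncomputable def dH {n : ℕ} (ξ η : Hpt n) : ℝ := KN (hmul (hinv η) ξ)

/-- The horizontal plane at `ξ₀`. -/
def Hplane {n : ℕ} (ξ₀ : Hpt n) : Set (Hpt n) :=
  {ξ | ξ.2.2 = ξ₀.2.2 + 2 * (dotR ξ.1 ξ₀.2.1 - dotR ξ₀.1 ξ.2.1)}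

/-- Projection onto the first `2n` coordinates. -/
def Pr1 {n : ℕ} (ξ : Hpt n) : (Fin n → ℝ) × (Fin n → ℝ) := (ξ.1, ξ.2.1)

/-- Dot product on `ℝ^{2n}`. -/
def dot2n {n : ℕ} (p q : (Fin n → ℝ) × (Fin n → ℝ)) : ℝ := dotR p.1 q.1 + dotR p.2 q.2

/-- The horizontal subdifferential of `u` (with domain `Ω`) at `ξ₀`. -/
def subdiffH {n : ℕ} (Ω : Set (Hpt n)) (u : Hpt n → ℝ) (ξ₀ : Hpt n) :
    Set ((Fin n → ℝ) × (Fin n → ℝ)) :=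
  {p | ∀ ξ ∈ Ω ∩ Hplane ξ₀, u ξ ≥ u ξ₀ + dot2n p (Pr1 ξ - Pr1 ξ₀)}

/-- `H`-convexity of a set. -/
def HConvexSet {n : ℕ} (S : Set (Hpt n)) : Prop :=
  ∀ ξ₁ ∈ S, ∀ ξ₂ ∈ S, ξ₁ ∈ Hplane ξ₂ → ∀ l ∈ Set.Icc (0 : ℝ) 1,
    hmul ξ₁ (hdil l (hmul (hinv ξ₁) ξ₂)) ∈ S

/-- `H`-convexity of a function on a set. -/
def HConvexOn {n : ℕ} (S : Set (Hpt n)) (u : Hpt n → ℝ) : Prop :=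
  ∀ ξ₁ ∈ S, ∀ ξ₂ ∈ S, ξ₁ ∈ Hplane ξ₂ → ∀ l ∈ Set.Icc (0 : ℝ) 1,
    u (hmul ξ₁ (hdil l (hmul (hinv ξ₁) ξ₂))) ≤ (1 - l) * u ξ₁ + l * u ξ₂

/-- Horizontal boundedness: the horizontal slices have uniformly bounded diameter. -/
def horizBounded {n : ℕ} (Ω : Set (Hpt n)) : Prop :=
  ∃ M : ℝ, ∀ ξ ∈ Ω, ∀ ζ ∈ Ω ∩ Hplane ξ, ∀ η ∈ Ω ∩ Hplane ξ, dH ζ η ≤ M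

/-!
Every `ζ ∈ Ω ∩ H_{ξ₀}` is the limit of the points `ζ_k ∈ H_{ξ_k}` with the same projection
`Pr₁ ζ`. Since `Ω` is open, `ζ_k ∈ Ω` eventually, so the subgradient inequalities of `p_k` at
`ξ_k` can be tested at `ζ_k`, and they pass to the limit by continuity of `u`.
-/

def liftHplane {n : ℕ} (ξ : Hpt n) (q : (Fin n → ℝ) × (Fin n → ℝ)) : Hpt n :=
  (q.1, q.2, ξ.2.2 + 2 * (dotR q.1 ξ.2.1 - dotR ξ.1 q.2))

section

variable {n : ℕ}

theorem liftHplane_mem_Hplane (ξ : Hpt n) (q : (Fin n → ℝ) × (Fin n → ℝ)) :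
    liftHplane ξ q ∈ Hplane ξ :=
  rfl

theorem liftHplane_Pr1_of_mem_Hplane {ξ ζ : Hpt n} (h : ζ ∈ Hplane ξ) :
    liftHplane ξ (Pr1 ζ) = ζ :=
  Prod.ext rfl (Prod.ext rfl h.symm)

@[fun_prop]
theorem Continuous.dotR {α : Type*} [TopologicalSpace α] {f g : α → Fin n → ℝ}
    (hf : Continuous f) (hg : Continuous g) : Continuous fun a => dotR (f a) (g a) := by
  unfold _root_.dotR
  fun_prop

theorem Filter.Tendsto.dotR {α : Type*} {l : Filter α} {f g : α → Fin n → ℝ} {a b : Fin n → ℝ}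
    (hf : Tendsto f l (nhds a)) (hg : Tendsto g l (nhds b)) :
    Tendsto (fun x => dotR (f x) (g x)) l (nhds (dotR a b)) :=
  tendsto_finsetSum _ fun i _ => (tendsto_pi_nhds.1 hf i).mul (tendsto_pi_nhds.1 hg i)

theorem Filter.Tendsto.dot2n {α : Type*} {l : Filter α}
    {f g : α → (Fin n → ℝ) × (Fin n → ℝ)} {p q : (Fin n → ℝ) × (Fin n → ℝ)}
    (hf : Tendsto f l (nhds p)) (hg : Tendsto g l (nhds q)) :
    Tendsto (fun x => dot2n (f x) (g x)) l (nhds (dot2n p q)) :=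
  (hf.fst_nhds.dotR hg.fst_nhds).add (hf.snd_nhds.dotR hg.snd_nhds)

theorem continuous_Pr1 : Continuous (Pr1 : Hpt n → (Fin n → ℝ) × (Fin n → ℝ)) := by
  unfold Pr1
  fun_prop

theorem continuous_liftHplane (q : (Fin n → ℝ) × (Fin n → ℝ)) :
    Continuous fun ξ : Hpt n => liftHplane ξ q := by
  unfold liftHplane
  fun_prop

theorem tendsto_liftHplane {α : Type*} {l : Filter α} {ξ : α → Hpt n} {ξ₀ ζ : Hpt n}
    (hξ : Filter.Tendsto ξ l (nhds ξ₀)) (hζ : ζ ∈ Hplane ξ₀) :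
    Filter.Tendsto (fun a => liftHplane (ξ a) (Pr1 ζ)) l (nhds ζ) := by
  have := ((continuous_liftHplane (Pr1 ζ)).tendsto ξ₀).comp hξ
  rwa [liftHplane_Pr1_of_mem_Hplane hζ] at this

end

theorem subdiffH_closed_graph_general {n : ℕ} (Ω : Set (Hpt n)) (hΩ : IsOpen Ω)
    (u : Hpt n → ℝ) (hu : ContinuousOn u Ω)
    (ξseq : ℕ → Hpt n) (pseq : ℕ → (Fin n → ℝ) × (Fin n → ℝ))
    (ξ₀ : Hpt n) (p₀ : (Fin n → ℝ) × (Fin n → ℝ))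
    (hξ₀ : ξ₀ ∈ Ω)
    (hξlim : Filter.Tendsto ξseq Filter.atTop (nhds ξ₀))
    (hp : ∀ k, pseq k ∈ subdiffH Ω u (ξseq k))
    (hplim : Filter.Tendsto pseq Filter.atTop (nhds p₀)) :
    p₀ ∈ subdiffH Ω u ξ₀ := by
  rintro ζ ⟨hζΩ, hζH⟩
  set ζseq := fun k => liftHplane (ξseq k) (Pr1 ζ)
  have hζlim : Filter.Tendsto ζseq Filter.atTop (nhds ζ) := tendsto_liftHplane hξlim hζH
  have hsubgrad : ∀ᶠ k in Filter.atTop,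
      u (ξseq k) + dot2n (pseq k) (Pr1 ζ - Pr1 (ξseq k)) ≤ u (ζseq k) := by
    filter_upwards [hζlim.eventually (hΩ.eventually_mem hζΩ)] with k hk
    exact hp k (ζseq k) ⟨hk, liftHplane_mem_Hplane _ _⟩
  have hu_ζ : Filter.Tendsto (fun k => u (ζseq k)) Filter.atTop (nhds (u ζ)) :=
    (hu.continuousAt (hΩ.mem_nhds hζΩ)).tendsto.comp hζlim
  have hu_ξ : Filter.Tendsto (fun k => u (ξseq k)) Filter.atTop (nhds (u ξ₀)) :=
    (hu.continuousAt (hΩ.mem_nhds hξ₀)).tendsto.comp hξlim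
  have hdot : Filter.Tendsto (fun k => dot2n (pseq k) (Pr1 ζ - Pr1 (ξseq k)))
      Filter.atTop (nhds (dot2n p₀ (Pr1 ζ - Pr1 ξ₀))) :=
    hplim.dot2n (tendsto_const_nhds.sub ((continuous_Pr1.tendsto ξ₀).comp hξlim))
  exact le_of_tendsto_of_tendsto (hu_ξ.add hdot) hu_ζ hsubgrad

/-- Closedness of the graph of the horizontal normal mapping of a continuous function. -/
theorem subdiffH_closed_graph {n : ℕ} (Ω : Set (Hpt n)) (hΩ : IsOpen Ω)
    (u : Hpt n → ℝ) (hu : ContinuousOn u Ω)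
    (ξseq : ℕ → Hpt n) (pseq : ℕ → (Fin n → ℝ) × (Fin n → ℝ))
    (ξ₀ : Hpt n) (p₀ : (Fin n → ℝ) × (Fin n → ℝ))
    (hmem : ∀ k, ξseq k ∈ Ω) (hξ₀ : ξ₀ ∈ Ω)
    (hξlim : Filter.Tendsto ξseq Filter.atTop (nhds ξ₀))
    (hp : ∀ k, pseq k ∈ subdiffH Ω u (ξseq k))
    (hplim : Filter.Tendsto pseq Filter.atTop (nhds p₀)) :
    p₀ ∈ subdiffH Ω u ξ₀ :=
  subdiffH_closed_graph_general Ω hΩ u hu ξseq pseq ξ₀ p₀ hξ₀ hξlim hp hplim
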